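/- arXiv:1907.01598 — 5 statements merged into one kernel-verified Lean document; each statement's English description precedes it below -/
import Mathlib

section
/- For every g > 0, every continuous u : ℝ → ℝ and every T > 0, there exist an initial angle φ ∈ (0, π) and a solution α of the pendulum equation with α(0) = φ and α'(0) = 0 such that α(t) ∈ (0, π) for all t ∈ [0, T]. (Whitney's problem: the rod can be placed at rest in a position from which it never touches the floor during the whole journey.) -/
/-- `α` is a solution of the inverted-pendulum equation
`α'' t = -g * cos (α t) + u t * sin (α t)`: it is twice continuously
differentiable and satisfies the equation at every time `t`. -/
def IsPendulumSolution (g : ℝ) (u : ℝ → ℝ) (α : ℝ → ℝ) : Prop :=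
  ContDiff ℝ 2 α ∧
    ∀ t : ℝ, deriv (deriv α) t = -g * Real.cos (α t) + u t * Real.sin (α t)

/-!
A shooting argument. Let `θ_φ` be the angle of the rod released at rest from `φ`. At the floor
the acceleration is `-g cos 0 = -g < 0` and `-g cos π = g > 0` respectively, so a rod that
touches the floor goes through it at once. Hence `φ = 0` drops below `0` before reaching `π`,
`φ = π` rises above `π` before reaching `0`, and a rod that ever leaves `(0, π)` does one of
the two. By continuous dependence on `φ` these two sets of angles are open; they are disjoint,
so by connectedness of `[0, π]` some `φ` lies in neither, and that rod stays above the floor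
forever. Solutions exist for all times because the equation, as a first-order system, is
Lipschitz in the state with constant `max 1 (g + |u t|)`.
-/

open Set Function Real MeasureTheory intervalIntegral Metric Filter Topology
open scoped NNReal Interval

section GlobalExistence

open scoped Nat

variable {E : Type*} [NormedAddCommGroup E] {F : ℝ → E → E} {a b t₀ : ℝ} {K : ℝ≥0}

lemma continuous_comp_IccExtend (hF : Continuous (uncurry F)) (hab : a ≤ b) (γ : C(Icc a b, E)) :
    Continuous fun τ => F τ (IccExtend hab γ τ) :=
  hF.comp (continuous_id.prodMk γ.continuous.Icc_extend')

variable [NormedSpace ℝ E]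

theorem dist_le_exp_mul_dist_of_hasDerivAt {X Y : ℝ → E} {t : ℝ}
    (hK : ∀ t ∈ Icc a b, LipschitzWith K (F t)) (hX : ∀ t, HasDerivAt X (F t (X t)) t)
    (hY : ∀ t, HasDerivAt Y (F t (Y t)) t) (ht : t ∈ Icc a b) :
    dist (X t) (Y t) ≤ exp (K * (b - a)) * dist (X a) (Y a) := by
  calc dist (X t) (Y t) ≤ dist (X a) (Y a) * exp (K * (t - a)) :=
        dist_le_of_trajectories_ODE_of_mem (s := fun _ => univ)
          (fun s hs => (hK s (Ico_subset_Icc_self hs)).lipschitzOnWith)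
          (HasDerivAt.continuousOn fun s _ => hX s) (fun s _ => (hX s).hasDerivWithinAt)
          (fun _ _ => trivial) (HasDerivAt.continuousOn fun s _ => hY s)
          (fun s _ => (hY s).hasDerivWithinAt) (fun _ _ => trivial) le_rfl t ht
    _ ≤ exp (K * (b - a)) * dist (X a) (Y a) := by
        rw [mul_comm]
        gcongr
        exact ht.2

noncomputable def picardIcc (hF : Continuous (uncurry F)) (hab : a ≤ b) (t₀ : ℝ) (x₀ : E)
    (γ : C(Icc a b, E)) : C(Icc a b, E) where
  toFun t := ODE.picard F t₀ x₀ (IccExtend hab γ) t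
  continuous_toFun := (continuous_const.add
    (continuous_primitive
      (fun _ _ => (continuous_comp_IccExtend hF hab γ).intervalIntegrable _ _) t₀)).comp
    continuous_subtype_val

lemma dist_iterate_picardIcc_apply_le (hF : Continuous (uncurry F)) (ht₀ : t₀ ∈ Icc a b)
    (hK : ∀ t ∈ Icc a b, LipschitzWith K (F t)) (x₀ : E) (n : ℕ) (γ δ : C(Icc a b, E))
    (t : Icc a b) :
    dist ((picardIcc hF (ht₀.1.trans ht₀.2) t₀ x₀)^[n] γ t)
        ((picardIcc hF (ht₀.1.trans ht₀.2) t₀ x₀)^[n] δ t) ≤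
      (K * |(t : ℝ) - t₀|) ^ n / n ! * dist γ δ := by
  set hab := ht₀.1.trans ht₀.2
  set P := picardIcc hF hab t₀ x₀
  induction n generalizing t with
  | zero => simpa using ContinuousMap.dist_apply_le_dist (f := γ) (g := δ) t
  | succ n ih =>
    have hint : ∀ γ : C(Icc a b, E), IntervalIntegrable (fun τ => F τ (IccExtend hab γ τ))
        volume t₀ t := fun γ => (continuous_comp_IccExtend hF hab γ).intervalIntegrable _ _
    have hpt : ∀ s ∈ Ι t₀ (t : ℝ),
        ‖F s (IccExtend hab (P^[n] γ) s) - F s (IccExtend hab (P^[n] δ) s)‖ ≤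
          K * ((K * |s - t₀|) ^ n / n ! * dist γ δ) := by
      intro s hs
      have hs' : s ∈ Icc a b := uIcc_subset_Icc ht₀ t.2 (Ioc_subset_Icc_self hs)
      rw [← dist_eq_norm, IccExtend_of_mem _ _ hs', IccExtend_of_mem _ _ hs']
      exact ((hK s hs').dist_le_mul _ _).trans (by gcongr; exact ih ⟨s, hs'⟩)
    rw [iterate_succ_apply', iterate_succ_apply', dist_eq_norm]
    change ‖(x₀ + ∫ τ in t₀..t, F τ (IccExtend hab (P^[n] γ) τ)) -
      (x₀ + ∫ τ in t₀..t, F τ (IccExtend hab (P^[n] δ) τ))‖ ≤ _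
    rw [add_sub_add_left_eq_sub, ← intervalIntegral.integral_sub (hint _) (hint _),
      norm_integral_eq_norm_integral_uIoc]
    calc _ ≤ ∫ s in Ι t₀ (t : ℝ), K * ((K * |s - t₀|) ^ n / n ! * dist γ δ) :=
          norm_integral_le_of_norm_le (Continuous.integrableOn_uIoc (by fun_prop))
            ((ae_restrict_mem measurableSet_Ioc).mono hpt)
      _ = (K * |(t : ℝ) - t₀|) ^ (n + 1) / (n + 1)! * dist γ δ := by
          simp_rw [mul_pow, div_eq_mul_inv, mul_assoc, MeasureTheory.integral_const_mul,
            MeasureTheory.integral_mul_const, integral_pow_abs_sub_uIoc, div_eq_mul_inv,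
            pow_succ' (K : ℝ), Nat.factorial_succ, Nat.cast_mul, Nat.cast_succ, mul_inv, mul_assoc]

variable [CompleteSpace E]

lemma exists_isFixedPt_picardIcc (hF : Continuous (uncurry F)) (ht₀ : t₀ ∈ Icc a b)
    (hK : ∀ t ∈ Icc a b, LipschitzWith K (F t)) (x₀ : E) :
    ∃ γ, IsFixedPt (picardIcc hF (ht₀.1.trans ht₀.2) t₀ x₀) γ := by
  have : Nonempty (Icc a b) := ⟨⟨t₀, ht₀⟩⟩
  obtain ⟨n, hn⟩ := ((FloorSemiring.tendsto_pow_div_factorial_atTop (K * (b - a))).eventually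
    (gt_mem_nhds zero_lt_one)).exists
  have hC : 0 ≤ (K * (b - a)) ^ n / n ! := by
    have := sub_nonneg.2 (ht₀.1.trans ht₀.2); positivity
  have hcontr : ContractingWith ⟨_, hC⟩ (picardIcc hF (ht₀.1.trans ht₀.2) t₀ x₀)^[n] := by
    refine ⟨hn, LipschitzWith.of_dist_le_mul fun γ δ => ?_⟩
    refine ContinuousMap.dist_le_iff_of_nonempty.2 fun t =>
      (dist_iterate_picardIcc_apply_le hF ht₀ hK x₀ n γ δ t).trans ?_
    have : |(t : ℝ) - t₀| ≤ b - a := abs_sub_le_iff.2 ⟨by linarith [t.2.2, ht₀.1],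
      by linarith [t.2.1, ht₀.2]⟩
    change _ ≤ (K * (b - a)) ^ n / n ! * _
    gcongr
  exact ⟨_, hcontr.isFixedPt_fixedPoint_iterate⟩

theorem exists_forall_mem_Icc_hasDerivAt (hF : Continuous (uncurry F)) (ht₀ : t₀ ∈ Icc a b)
    (hK : ∀ t ∈ Icc a b, LipschitzWith K (F t)) (x₀ : E) :
    ∃ X : ℝ → E, X t₀ = x₀ ∧ ∀ t ∈ Icc a b, HasDerivAt X (F t (X t)) t := by
  set hab := ht₀.1.trans ht₀.2
  obtain ⟨γ, hγ⟩ := exists_isFixedPt_picardIcc hF ht₀ hK x₀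
  refine ⟨ODE.picard F t₀ x₀ (IccExtend hab γ), ODE.picard_apply₀, fun t ht => ?_⟩
  have hX : ODE.picard F t₀ x₀ (IccExtend hab γ) t = IccExtend hab γ t := by
    rw [IccExtend_of_mem _ _ ht]
    exact DFunLike.congr_fun hγ ⟨t, ht⟩
  rw [hX]
  exact ((continuous_comp_IccExtend hF hab γ).integral_hasStrictDerivAt t₀ t).hasDerivAt.const_add
    x₀

/-- Solutions on the intervals `[t₀ - n, t₀ + n]` agree by uniqueness and glue together. -/
theorem exists_forall_hasDerivAt (hF : Continuous (uncurry F))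
    (hK : ∀ a b, ∃ K, ∀ t ∈ Icc a b, LipschitzWith K (F t)) (t₀ : ℝ) (x₀ : E) :
    ∃ X : ℝ → E, X t₀ = x₀ ∧ ∀ t, HasDerivAt X (F t (X t)) t := by
  have hloc (n : ℕ) : ∃ Y : ℝ → E, Y t₀ = x₀ ∧
      ∀ t ∈ Icc (t₀ - n) (t₀ + n), HasDerivAt Y (F t (Y t)) t := by
    obtain ⟨K, hKn⟩ := hK (t₀ - n) (t₀ + n)
    have hn : (0 : ℝ) ≤ n := n.cast_nonneg
    exact exists_forall_mem_Icc_hasDerivAt hF ⟨by linarith, by linarith⟩ hKn x₀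
  choose Y hY₀ hY using hloc
  have hagree (m n : ℕ) (t : ℝ) (hm : t ∈ ball t₀ m) (hn : t ∈ ball t₀ n) : Y m t = Y n t := by
    wlog hmn : m ≤ n generalizing m n
    · exact (this n m hn hm (le_of_not_ge hmn)).symm
    have hsub : ball t₀ m ⊆ Icc (t₀ - n) (t₀ + n) := by
      rw [ball_eq_Ioo]
      exact Ioo_subset_Icc_self.trans (Icc_subset_Icc (by gcongr) (by gcongr))
    obtain ⟨K, hKn⟩ := hK (t₀ - n) (t₀ + n)
    rw [ball_eq_Ioo] at hm hsub
    refine ODE_solution_unique_of_mem_Ioo (t₀ := t₀) (s := fun _ => univ)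
      (fun s hs => (hKn s (hsub hs)).lipschitzOnWith)
      ⟨by linarith [hm.1, hm.2], by linarith [hm.1, hm.2]⟩
      (fun s hs => ⟨hY m s (Ioo_subset_Icc_self hs), trivial⟩)
      (fun s hs => ⟨hY n s (hsub hs), trivial⟩) (by rw [hY₀, hY₀]) hm
  have hmem (t : ℝ) : t ∈ ball t₀ (⌈dist t t₀⌉₊ + 1 : ℕ) := by
    rw [mem_ball]; push_cast; linarith [Nat.le_ceil (dist t t₀)]
  refine ⟨fun t => Y (⌈dist t t₀⌉₊ + 1) t, hY₀ _, fun t => ?_⟩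
  set n := ⌈dist t t₀⌉₊ + 1
  have hY_eq : (fun s => Y (⌈dist s t₀⌉₊ + 1) s) =ᶠ[𝓝 t] Y n :=
    eventually_of_mem (isOpen_ball.mem_nhds (hmem t)) fun s hs => hagree _ n s (hmem s) hs
  exact (hY n t (Ioo_subset_Icc_self (ball_eq_Ioo t₀ n ▸ hmem t))).congr_of_eventuallyEq hY_eq

end GlobalExistence

/-- `DropsBelowBefore (-f) (-b) (-a)` says that `f` rises above `b` before reaching `a`. -/
def DropsBelowBefore (f : ℝ → ℝ) (a b : ℝ) : Prop :=
  ∃ t, 0 ≤ t ∧ f t < a ∧ ∀ s ∈ Icc 0 t, f s < b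

section Shooting

variable {f f' f'' : ℝ → ℝ} {a b : ℝ}

lemma DropsBelowBefore.not_neg (h : DropsBelowBefore f a b) :
    ¬DropsBelowBefore (-f) (-b) (-a) := by
  rintro ⟨t', ht', hlt', hbelow'⟩
  obtain ⟨t, ht, hlt, hbelow⟩ := h
  rcases le_total t t' with htt' | htt'
  · linarith [show -f t < -a from hbelow' t ⟨ht, htt'⟩]
  · linarith [hbelow t' ⟨ht', htt'⟩, show -f t' < -b from hlt']

lemma isOpen_setOf_dropsBelowBefore {Θ : ℝ → ℝ → ℝ} (hΘ : ∀ φ, Continuous (Θ φ))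
    (hlip : ∀ T, ∃ C, ∀ φ ψ, ∀ t ∈ Icc 0 T, dist (Θ φ t) (Θ ψ t) ≤ C * dist φ ψ) (a b : ℝ) :
    IsOpen {φ | DropsBelowBefore (Θ φ) a b} := by
  refine isOpen_iff_mem_nhds.2 fun φ ⟨t, ht, hlt, hbelow⟩ => ?_
  obtain ⟨s₀, hs₀, hmax⟩ := isCompact_Icc.exists_isMaxOn ⟨0, le_rfl, ht⟩ (hΘ φ).continuousOn
  obtain ⟨C, hC⟩ := hlip t
  set ε := min (b - Θ φ s₀) (a - Θ φ t)
  have hε : 0 < ε := lt_min (by linarith [hbelow s₀ hs₀]) (by linarith)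
  have hclose : ∀ᶠ ψ in 𝓝 φ, C * dist ψ φ < ε :=
    ((continuous_const.mul (continuous_id.dist continuous_const)).tendsto' φ 0 (by simp)).eventually
      (gt_mem_nhds hε)
  filter_upwards [hclose] with ψ hψ
  have hnear : ∀ s ∈ Icc 0 t, Θ ψ s < Θ φ s + ε := fun s hs =>
    by linarith [le_abs_self (Θ ψ s - Θ φ s), (Real.dist_eq _ _ ▸ hC ψ φ s hs)]
  refine ⟨t, ht, by linarith [hnear t ⟨ht, le_rfl⟩, min_le_right (b - Θ φ s₀) (a - Θ φ t)],
    fun s hs => ?_⟩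
  linarith [hnear s hs, show Θ φ s ≤ Θ φ s₀ from hmax hs, min_le_left (b - Θ φ s₀) (a - Θ φ t)]

lemma HasDerivAt.nonpos_of_forall_Ioo_lt {d x r : ℝ} (h : HasDerivAt f d x) (hr : r < x)
    (hlt : ∀ s ∈ Ioo r x, f x < f s) : d ≤ 0 := by
  refine le_of_tendsto (hasDerivAt_iff_tendsto_slope_left_right.1 h).1 ?_
  filter_upwards [Ioo_mem_nhdsLT hr] with s hs
  rw [slope_def_field]
  exact div_nonpos_of_nonneg_of_nonpos (by linarith [hlt s hs]) (by linarith [hs.2])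

lemma dropsBelowBefore_of_hasDerivAt {ts c : ℝ} (hf : ∀ t, HasDerivAt f (f' t) t)
    (hf' : HasDerivAt f' c ts) (hc : c < 0) (hd : f' ts ≤ 0) (hts : 0 ≤ ts) (hfa : f ts = a)
    (hab : a < b) (hbefore : ∀ s ∈ Ico 0 ts, f s < b) : DropsBelowBefore f a b := by
  have hneg : ∀ᶠ s in 𝓝[>] ts, f' s < 0 := by
    filter_upwards [(hasDerivAt_iff_tendsto_slope_left_right.1 hf').2.eventually_lt_const hc,
      self_mem_nhdsWithin] with s hs hts'
    rw [slope_def_field, div_neg_iff] at hs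
    rcases hs with hs | hs
    · linarith [hs.2, show ts < s from hts']
    · linarith [hs.1]
  obtain ⟨m, hm, hsub⟩ := mem_nhdsGT_iff_exists_Ioc_subset.1 hneg
  have hanti : StrictAntiOn f (Icc ts m) := by
    refine strictAntiOn_of_deriv_neg (convex_Icc _ _)
      (fun s _ => (hf s).continuousAt.continuousWithinAt) fun s hs => ?_
    rw [interior_Icc] at hs
    rw [(hf s).deriv]
    exact hsub ⟨hs.1, hs.2.le⟩
  refine ⟨m, hts.trans hm.le, hfa ▸ hanti ⟨le_rfl, hm.le⟩ ⟨hm.le, le_rfl⟩ hm, fun s hs => ?_⟩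
  rcases lt_or_ge s ts with h | h
  · exact hbefore s ⟨hs.1, h⟩
  · exact (hanti.antitoneOn ⟨le_rfl, hm.le⟩ ⟨h, hs.2⟩ h).trans_lt (hfa ▸ hab)

lemma exists_first_exit (hf : Continuous f) (h0 : f 0 ∈ Ioo a b)
    (hexit : ∃ t, 0 ≤ t ∧ f t ∉ Ioo a b) :
    ∃ ts, 0 < ts ∧ (∀ s ∈ Ico 0 ts, f s ∈ Ioo a b) ∧ (f ts = a ∨ f ts = b) := by
  set S := Ici 0 ∩ f ⁻¹' (Ioo a b)ᶜ
  have hSbdd : BddBelow S := ⟨0, fun s hs => hs.1⟩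
  have hmem : sInf S ∈ S :=
    (isClosed_Ici.inter (isOpen_Ioo.preimage hf).isClosed_compl).csInf_mem hexit hSbdd
  have hpos : 0 < sInf S := lt_of_le_of_ne hmem.1 fun h => hmem.2 (h ▸ h0)
  have hbefore : ∀ s ∈ Ico 0 (sInf S), f s ∈ Ioo a b := fun s hs =>
    by_contra fun h => (csInf_le hSbdd ⟨hs.1, h⟩).not_gt hs.2
  have hIcc : f (sInf S) ∈ Icc a b := by
    rw [← closure_Ioo (h0.1.trans h0.2).ne]
    exact map_mem_closure hf (closure_Ico hpos.ne ▸ right_mem_Icc.2 hpos.le) hbefore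
  refine ⟨sInf S, hpos, hbefore, ?_⟩
  by_contra! hne
  exact hmem.2 ⟨hIcc.1.lt_of_ne (Ne.symm hne.1), hIcc.2.lt_of_ne hne.2⟩

lemma forall_mem_Ioo_of_not_dropsBelowBefore (hf : ∀ t, HasDerivAt f (f' t) t)
    (hf' : ∀ t, HasDerivAt f' (f'' t) t) (ha : ∀ t, f t = a → f'' t < 0)
    (hb : ∀ t, f t = b → 0 < f'' t) (h0 : f 0 ∈ Ioo a b) (hlow : ¬DropsBelowBefore f a b)
    (hhigh : ¬DropsBelowBefore (-f) (-b) (-a)) : ∀ t, 0 ≤ t → f t ∈ Ioo a b := by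
  by_contra! hexit
  obtain ⟨ts, hts, hbefore, hfa | hfb⟩ :=
    exists_first_exit (continuous_iff_continuousAt.2 fun t => (hf t).continuousAt) h0 hexit
  · refine hlow (dropsBelowBefore_of_hasDerivAt hf (hf' ts) (ha ts hfa) ?_ hts.le hfa
      (h0.1.trans h0.2) fun s hs => (hbefore s hs).2)
    exact (hf ts).nonpos_of_forall_Ioo_lt hts fun s hs => hfa ▸ (hbefore s ⟨hs.1.le, hs.2⟩).1
  · refine hhigh (dropsBelowBefore_of_hasDerivAt (fun t => (hf t).neg) (hf' ts).neg
      (neg_neg_of_pos (hb ts hfb)) ?_ hts.le (by simp [hfb]) (neg_lt_neg (h0.1.trans h0.2))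
      fun s hs => neg_lt_neg (hbefore s hs).1)
    exact (hf ts).neg.nonpos_of_forall_Ioo_lt hts fun s hs =>
      neg_lt_neg (hfb ▸ (hbefore s ⟨hs.1.le, hs.2⟩).2)

theorem exists_forall_mem_Ioo_of_repelling {Θ Θ' Θ'' : ℝ → ℝ → ℝ} {a b : ℝ} (hab : a < b)
    (hΘ : ∀ φ t, HasDerivAt (Θ φ) (Θ' φ t) t) (hΘ' : ∀ φ t, HasDerivAt (Θ' φ) (Θ'' φ t) t)
    (hlip : ∀ T, ∃ C, ∀ φ ψ, ∀ t ∈ Icc 0 T, dist (Θ φ t) (Θ ψ t) ≤ C * dist φ ψ)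
    (hΘ₀ : ∀ φ, Θ φ 0 = φ) (hΘ'₀ : ∀ φ, Θ' φ 0 = 0) (ha : ∀ φ t, Θ φ t = a → Θ'' φ t < 0)
    (hb : ∀ φ t, Θ φ t = b → 0 < Θ'' φ t) :
    ∃ φ ∈ Ioo a b, ∀ t, 0 ≤ t → Θ φ t ∈ Ioo a b := by
  have hcont (φ : ℝ) : Continuous (Θ φ) :=
    continuous_iff_continuousAt.2 fun t => (hΘ φ t).continuousAt
  have hlow : IsOpen {φ | DropsBelowBefore (Θ φ) a b} :=
    isOpen_setOf_dropsBelowBefore hcont hlip a b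
  have hhigh : IsOpen {φ | DropsBelowBefore (-Θ φ) (-b) (-a)} :=
    isOpen_setOf_dropsBelowBefore (fun φ => (hcont φ).neg)
      (by simpa only [Pi.neg_apply, dist_neg_neg] using hlip) (-b) (-a)
  have ha_low : DropsBelowBefore (Θ a) a b :=
    dropsBelowBefore_of_hasDerivAt (hΘ a) (hΘ' a 0) (ha a 0 (hΘ₀ a)) (hΘ'₀ a).le le_rfl (hΘ₀ a)
      hab (by simp)
  have hb_high : DropsBelowBefore (-Θ b) (-b) (-a) :=
    dropsBelowBefore_of_hasDerivAt (fun t => (hΘ b t).neg) (hΘ' b 0).neg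
      (neg_neg_of_pos (hb b 0 (hΘ₀ b))) (by simp [hΘ'₀]) le_rfl (by simp [hΘ₀])
      (neg_lt_neg hab) (by simp)
  obtain ⟨φ, hφ, hφlow, hφhigh⟩ : ∃ φ ∈ Icc a b,
      ¬DropsBelowBefore (Θ φ) a b ∧ ¬DropsBelowBefore (-Θ φ) (-b) (-a) := by
    by_contra! h
    obtain ⟨φ, -, hφlow, hφhigh⟩ := isPreconnected_Icc _ _ hlow hhigh
      (fun φ hφ => (em _).elim Or.inl fun h' => Or.inr (h φ hφ h'))
      ⟨a, left_mem_Icc.2 hab.le, ha_low⟩ ⟨b, right_mem_Icc.2 hab.le, hb_high⟩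
    exact hφlow.not_neg hφhigh
  have hφ₀ : φ ∈ Ioo a b :=
    ⟨hφ.1.lt_of_ne (by rintro rfl; exact hφlow ha_low),
      hφ.2.lt_of_ne (by rintro rfl; exact hφhigh hb_high)⟩
  exact ⟨φ, hφ₀, forall_mem_Ioo_of_not_dropsBelowBefore (hΘ φ) (hΘ' φ) (ha φ) (hb φ)
    (by rwa [hΘ₀]) hφlow hφhigh⟩

end Shooting

section ProdDeriv

variable {𝕜 E F : Type*} [NontriviallyNormedField 𝕜] [NormedAddCommGroup E] [NormedSpace 𝕜 E]
  [NormedAddCommGroup F] [NormedSpace 𝕜 F] {f : 𝕜 → E × F} {f' : E × F} {x : 𝕜}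

theorem HasDerivAt.fst (h : HasDerivAt f f' x) : HasDerivAt (fun s => (f s).1) f'.1 x :=
  (hasFDerivAt_fst (𝕜 := 𝕜) (p := f x)).comp_hasDerivAt x h

theorem HasDerivAt.snd (h : HasDerivAt f f' x) : HasDerivAt (fun s => (f s).2) f'.2 x :=
  (hasFDerivAt_snd (𝕜 := 𝕜) (p := f x)).comp_hasDerivAt x h

end ProdDeriv

section Pendulum

variable {g : ℝ} {u : ℝ → ℝ}

noncomputable def pendulumField (g : ℝ) (u : ℝ → ℝ) (t : ℝ) (p : ℝ × ℝ) : ℝ × ℝ :=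
  (p.2, -g * cos p.1 + u t * sin p.1)

lemma continuous_uncurry_pendulumField (hu : Continuous u) :
    Continuous (uncurry (pendulumField g u)) := by
  unfold pendulumField
  fun_prop

lemma lipschitzWith_pendulumField (g : ℝ) (u : ℝ → ℝ) (t : ℝ) :
    LipschitzWith (max 1 (‖g‖₊ + ‖u t‖₊)) (pendulumField g u t) := by
  have hangle : LipschitzWith (‖g‖₊ + ‖u t‖₊) fun x : ℝ => -g * cos x + u t * sin x := by
    simpa using ((lipschitzWith_smul (-g)).comp lipschitzWith_cos).add
      ((lipschitzWith_smul (u t)).comp lipschitzWith_sin)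
  have h := (LipschitzWith.prod_snd (α := ℝ) (β := ℝ)).prodMk
    (hangle.comp LipschitzWith.prod_fst)
  rw [mul_one] at h
  exact h

lemma exists_lipschitzWith_pendulumField (hu : Continuous u) (a b : ℝ) :
    ∃ K, ∀ t ∈ Icc a b, LipschitzWith K (pendulumField g u t) := by
  obtain ⟨M, hM⟩ := (isCompact_Icc.image (continuous_nnnorm.comp hu)).bddAbove
  exact ⟨max 1 (‖g‖₊ + M), fun t ht => (lipschitzWith_pendulumField g u t).weaken
    (max_le_max le_rfl (add_le_add le_rfl (hM ⟨t, ht, rfl⟩)))⟩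

lemma isPendulumSolution_fst (hu : Continuous u) {X : ℝ → ℝ × ℝ}
    (hX : ∀ t, HasDerivAt X (pendulumField g u t (X t)) t) :
    IsPendulumSolution g u fun t => (X t).1 := by
  have hX₁ (t : ℝ) : HasDerivAt (fun s => (X s).1) (X t).2 t := (hX t).fst
  have hX₂ (t : ℝ) : HasDerivAt (fun s => (X s).2) (-g * cos (X t).1 + u t * sin (X t).1) t :=
    (hX t).snd
  have hd : deriv (fun s => (X s).1) = fun s => (X s).2 := funext fun t => (hX₁ t).deriv
  have hd₂ : deriv (fun s => (X s).2) = fun t => -g * cos (X t).1 + u t * sin (X t).1 :=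
    funext fun t => (hX₂ t).deriv
  have hcont : Continuous X := continuous_iff_continuousAt.2 fun t => (hX t).continuousAt
  refine ⟨?_, fun t => by rw [hd, hd₂]⟩
  rw [show (2 : WithTop ℕ∞) = 1 + 1 by norm_num, contDiff_succ_iff_deriv, hd]
  exact ⟨fun t => (hX₁ t).differentiableAt, by simp,
    contDiff_one_iff_deriv.2 ⟨fun t => (hX₂ t).differentiableAt, by rw [hd₂]; fun_prop⟩⟩

lemma exists_dist_fst_le_mul_dist_of_pendulumField (hu : Continuous u) {X : ℝ → ℝ → ℝ × ℝ}
    (hX : ∀ φ t, HasDerivAt (X φ) (pendulumField g u t (X φ t)) t)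
    (hX₀ : ∀ φ, X φ 0 = (φ, 0)) (T : ℝ) :
    ∃ C, ∀ φ ψ, ∀ t ∈ Icc 0 T, dist (X φ t).1 (X ψ t).1 ≤ C * dist φ ψ := by
  obtain ⟨K, hK⟩ := exists_lipschitzWith_pendulumField (g := g) hu 0 T
  refine ⟨exp (K * T), fun φ ψ t ht => ?_⟩
  calc dist (X φ t).1 (X ψ t).1 ≤ dist (X φ t) (X ψ t) := by
        rw [Prod.dist_eq]; exact le_max_left _ _
    _ ≤ exp (K * (T - 0)) * dist (X φ 0) (X ψ 0) :=
        dist_le_exp_mul_dist_of_hasDerivAt hK (hX φ) (hX ψ) ht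
    _ = exp (K * T) * dist φ ψ := by simp [hX₀, Prod.dist_eq]

end Pendulum

theorem whitney_finite_horizon_general (g : ℝ) (hg : 0 < g) (u : ℝ → ℝ) (hu : Continuous u)
    (T : ℝ) :
    ∃ φ ∈ Set.Ioo (0 : ℝ) Real.pi, ∃ α : ℝ → ℝ,
      IsPendulumSolution g u α ∧ α 0 = φ ∧ deriv α 0 = 0 ∧
        ∀ t ∈ Set.Icc (0 : ℝ) T, α t ∈ Set.Ioo (0 : ℝ) Real.pi := by
  choose X hX₀ hX using fun φ : ℝ => exists_forall_hasDerivAt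
    (continuous_uncurry_pendulumField (g := g) hu) (exists_lipschitzWith_pendulumField hu) 0
    ((φ, 0) : ℝ × ℝ)
  obtain ⟨φ, hφ, hstay⟩ := exists_forall_mem_Ioo_of_repelling pi_pos
    (Θ' := fun φ t => (X φ t).2) (Θ'' := fun φ t => -g * cos (X φ t).1 + u t * sin (X φ t).1)
    (fun φ t => (hX φ t).fst) (fun φ t => (hX φ t).snd)
    (exists_dist_fst_le_mul_dist_of_pendulumField hu hX hX₀) (fun φ => by simp [hX₀])
    (fun φ => by simp [hX₀]) (fun φ t h => by simp [h, hg]) (fun φ t h => by simp [h, hg])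
  exact ⟨φ, hφ, _, isPendulumSolution_fst hu (hX φ), by simp [hX₀],
    by rw [(hX φ 0).fst.deriv, hX₀]; rfl, fun t ht => hstay t ht.1⟩

/-- Whitney's problem on a finite time interval: there is an initial angle
`φ ∈ (0, π)` from which the rod, released at rest, stays strictly above the
floor during the whole journey `[0, T]`. -/
theorem whitney_finite_horizon (g : ℝ) (hg : 0 < g) (u : ℝ → ℝ) (hu : Continuous u)
    (T : ℝ) (hT : 0 < T) :
    ∃ φ ∈ Set.Ioo (0 : ℝ) Real.pi, ∃ α : ℝ → ℝ,
      IsPendulumSolution g u α ∧ α 0 = φ ∧ deriv α 0 = 0 ∧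
        ∀ t ∈ Set.Icc (0 : ℝ) T, α t ∈ Set.Ioo (0 : ℝ) Real.pi :=
  whitney_finite_horizon_general g hg u hu T
end

section
/- Descent lemma: let M ≥ 0 and let ε ∈ (0, π/2) satisfy c := g·cos(ε) − M·sin(ε) > 0, and set δ := √(2ε/c). Suppose t₀ ∈ ℝ and |u(t)| ≤ M for all t ∈ [t₀, t₀ + δ]. Then for every solution α with 0 < α(t₀) ≤ ε and α'(t₀) ≤ 0, there exists t₁ ∈ [t₀, t₀ + δ] such that α(t₁) = 0 and α(s) ∈ (0, ε] for all s ∈ [t₀, t₁). (Once the rod is sufficiently close to the floor and not moving upward, the bounded inertial force cannot overcome gravity and the rod reaches the floor within time δ.) -/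
open Set Real Filter Topology

theorem neg_mul_cos_add_mul_sin_le {g M ε x v : ℝ} (hg : 0 ≤ g) (hε : ε ≤ π / 2)
    (hx : 0 < x) (hxε : x ≤ ε) (hv : |v| ≤ M) :
    -g * cos x + v * sin x ≤ -(g * cos ε - M * sin ε) := by
  have hcos : cos ε ≤ cos x := cos_le_cos_of_nonneg_of_le_pi hx.le (by linarith [pi_pos]) hxε
  have hsin : sin x ≤ sin ε := sin_le_sin_of_le_of_le_pi_div_two (by linarith [pi_pos]) hε hxε
  have hsin_nonneg : 0 ≤ sin x := sin_nonneg_of_nonneg_of_le_pi hx.le (by linarith [pi_pos])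
  have hinertia : v * sin x ≤ M * sin ε := calc
    v * sin x ≤ |v| * sin x := mul_le_mul_of_nonneg_right (le_abs_self v) hsin_nonneg
    _ ≤ M * sin ε := mul_le_mul hv hsin hsin_nonneg ((abs_nonneg v).trans hv)
  nlinarith [mul_le_mul_of_nonneg_left hcos hg]

theorem ContDiff.continuous_deriv_deriv_two {f : ℝ → ℝ} (hf : ContDiff ℝ 2 f) :
    Continuous (deriv (deriv f)) :=
  ((contDiff_succ_iff_deriv (n := 1)).mp hf).2.2.continuous_deriv_one

theorem le_and_deriv_le_of_deriv_deriv_le {f : ℝ → ℝ} {a b c ε : ℝ} (hf : ContDiff ℝ 2 f)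
    (hc : 0 < c) (hacc : ∀ x ∈ Icc a b, f x ≤ ε → deriv (deriv f) x ≤ -c)
    (ha : f a ≤ ε) (ha' : deriv f a ≤ 0) :
    ∀ x ∈ Icc a b, f x ≤ ε ∧ deriv f x ≤ -c * (x - a) := by
  have hf₀ : Differentiable ℝ f := hf.differentiable (by norm_num)
  have hf₁ : Differentiable ℝ (deriv f) := hf.differentiable_deriv_two
  have hS : IsClosed {x | f x ≤ ε ∧ deriv f x ≤ -c * (x - a)} :=
    (isClosed_le hf₀.continuous continuous_const).inter
      (isClosed_le hf₁.continuous (by fun_prop))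
  refine (hS.inter isClosed_Icc).Icc_subset_of_forall_mem_nhdsWithin ⟨ha, by simpa⟩ ?_
  rintro x ⟨⟨hxε, hx'⟩, hax, hxb⟩
  have hneg : ∀ᶠ w in 𝓝[>] x, deriv (deriv f) w < 0 ∧ w < b := by
    have hx'' : deriv (deriv f) x < 0 := by linarith [hacc x ⟨hax, hxb.le⟩ hxε]
    exact eventually_nhdsWithin_of_eventually_nhds
      ((hf.continuous_deriv_deriv_two.continuousAt.eventually_lt continuousAt_const hx'').and
        (eventually_lt_nhds hxb))
  obtain ⟨u, hxu, hsub⟩ := mem_nhdsGT_iff_exists_Ioo_subset.mp hneg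
  refine mem_nhdsGT_iff_exists_Ioo_subset.mpr ⟨u, hxu, fun z hz => ?_⟩
  have hIcc : ∀ w ∈ Icc x z, w ∈ Icc a b := fun w hw =>
    ⟨hax.trans hw.1, hw.2.trans (hsub ⟨hz.1, hz.2⟩).2.le⟩
  have hf'_anti : AntitoneOn (deriv f) (Icc x z) :=
    antitoneOn_of_deriv_nonpos (convex_Icc x z) hf₁.continuous.continuousOn
      hf₁.differentiableOn fun w hw => by
        rw [interior_Icc] at hw
        exact (hsub ⟨hw.1, hw.2.trans hz.2⟩).1.le
  have hf_anti : AntitoneOn f (Icc x z) :=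
    antitoneOn_of_deriv_nonpos (convex_Icc x z) hf₀.continuous.continuousOn
      hf₀.differentiableOn fun w hw => by
        rw [interior_Icc] at hw
        nlinarith [hf'_anti (left_mem_Icc.2 hz.1.le) (Ioo_subset_Icc_self hw) hw.1.le]
  have hf_le : ∀ w ∈ Icc x z, f w ≤ ε := fun w hw =>
    (hf_anti (left_mem_Icc.2 hz.1.le) hw hw.1).trans hxε
  have hf'_decr := (convex_Icc x z).image_sub_le_mul_sub_of_deriv_le hf₁.continuous.continuousOn
    hf₁.differentiableOn (fun w hw => by
      rw [interior_Icc] at hw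
      exact hacc w (hIcc w (Ioo_subset_Icc_self hw)) (hf_le w (Ioo_subset_Icc_self hw)))
    x (left_mem_Icc.2 hz.1.le) z (right_mem_Icc.2 hz.1.le) hz.1.le
  exact ⟨hf_le z (right_mem_Icc.2 hz.1.le), by linarith⟩

theorem le_sub_mul_sq_of_deriv_le {f : ℝ → ℝ} {a b c : ℝ} (hf : Differentiable ℝ f)
    (hf' : ∀ x ∈ Icc a b, deriv f x ≤ -c * (x - a)) :
    ∀ x ∈ Icc a b, f x ≤ f a - c * (x - a) ^ 2 / 2 := by
  have hB (y : ℝ) : HasDerivAt (fun x => f a - c * (x - a) ^ 2 / 2) (-c * (y - a)) y :=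
    (((((hasDerivAt_id' y).sub_const a).fun_pow 2).const_mul c).div_const 2 |>.const_sub
      (f a)).congr_deriv (by norm_num; ring)
  exact fun x hx => image_le_of_deriv_right_le_deriv_boundary hf.continuous.continuousOn
    (fun y _ => (hf y).hasDerivAt.hasDerivWithinAt) (by simp) (by fun_prop)
    (fun y _ => (hB y).hasDerivWithinAt) (fun y hy => hf' y (Ico_subset_Icc_self hy)) hx

theorem exists_first_zero_of_continuousOn {f : ℝ → ℝ} {a b : ℝ} (hab : a ≤ b)
    (hf : ContinuousOn f (Icc a b)) (ha : 0 < f a) (hb : f b ≤ 0) :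
    ∃ t ∈ Icc a b, f t = 0 ∧ ∀ s ∈ Ico a t, 0 < f s := by
  have hzero : ∀ s ∈ Icc a b, f s ≤ 0 → ∃ r ∈ Icc a s, f r = 0 := fun s hs hfs =>
    intermediate_value_Icc' hs.1 (hf.mono (Icc_subset_Icc_right hs.2)) ⟨hfs, ha.le⟩
  set Z := Icc a b ∩ f ⁻¹' {0}
  have hZ : IsClosed Z := hf.preimage_isClosed_of_isClosed isClosed_Icc isClosed_singleton
  have hZbdd : BddBelow Z := ⟨a, fun x hx => hx.1.1⟩
  obtain ⟨r, hr, hfr⟩ := hzero b ⟨hab, le_rfl⟩ hb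
  have hmem : sInf Z ∈ Z := hZ.csInf_mem ⟨r, ⟨hr.1, hr.2⟩, hfr⟩ hZbdd
  refine ⟨sInf Z, hmem.1, hmem.2, fun s hs => ?_⟩
  by_contra! hfs
  obtain ⟨r, hr, hfr⟩ := hzero s ⟨hs.1, hs.2.le.trans hmem.1.2⟩ hfs
  exact (csInf_le hZbdd ⟨⟨hr.1, hr.2.trans (hs.2.le.trans hmem.1.2)⟩, hfr⟩).not_gt
    (hr.2.trans_lt hs.2)

theorem IsPendulumSolution.le_and_le_sub_mul_sq {g M ε a b : ℝ} {u α : ℝ → ℝ}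
    (hα : IsPendulumSolution g u α) (hg : 0 ≤ g) (hε : ε ≤ π / 2)
    (hc : 0 < g * cos ε - M * sin ε) (hu : ∀ t ∈ Icc a b, |u t| ≤ M)
    (hpos : ∀ t ∈ Icc a b, 0 < α t) (ha : α a ≤ ε) (ha' : deriv α a ≤ 0) :
    ∀ t ∈ Icc a b, α t ≤ ε ∧ α t ≤ α a - (g * cos ε - M * sin ε) * (t - a) ^ 2 / 2 := by
  have hbarrier := le_and_deriv_le_of_deriv_deriv_le hα.1 hc (fun t ht htε => by
    rw [hα.2 t]; exact neg_mul_cos_add_mul_sin_le hg hε (hpos t ht) htε (hu t ht)) ha ha'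
  exact fun t ht => ⟨(hbarrier t ht).1, le_sub_mul_sq_of_deriv_le
    (hα.1.differentiable (by norm_num)) (fun s hs => (hbarrier s hs).2) t ht⟩

theorem pendulum_descent_general (g : ℝ) (hg : 0 < g) (u : ℝ → ℝ)
    (M : ℝ) (ε : ℝ) (hε : ε ∈ Set.Ioo (0 : ℝ) (Real.pi / 2))
    (c : ℝ) (hc : c = g * Real.cos ε - M * Real.sin ε) (hcpos : 0 < c)
    (δ : ℝ) (hδ : δ = Real.sqrt (2 * ε / c))
    (t₀ : ℝ) (hub : ∀ t ∈ Set.Icc t₀ (t₀ + δ), |u t| ≤ M)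
    (α : ℝ → ℝ) (hα : IsPendulumSolution g u α)
    (h0 : 0 < α t₀) (h0' : α t₀ ≤ ε) (hv : deriv α t₀ ≤ 0) :
    ∃ t₁ ∈ Set.Icc t₀ (t₀ + δ), α t₁ = 0 ∧
      ∀ s ∈ Set.Ico t₀ t₁, α s ∈ Set.Ioc (0 : ℝ) ε := by
  have hδ₀ : 0 ≤ δ := hδ ▸ sqrt_nonneg _
  have hcδ : c * δ ^ 2 / 2 = ε := by
    rw [hδ, sq_sqrt (div_nonneg (by linarith [hε.1]) hcpos.le)]
    field_simp
  subst hc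
  have hdescent : ∀ t ≤ t₀ + δ, (∀ s ∈ Icc t₀ t, 0 < α s) → ∀ s ∈ Icc t₀ t,
      α s ≤ ε ∧ α s ≤ α t₀ - (g * cos ε - M * sin ε) * (s - t₀) ^ 2 / 2 :=
    fun t ht hpos => hα.le_and_le_sub_mul_sq hg.le hε.2.le hcpos
      (fun s hs => hub s ⟨hs.1, hs.2.trans ht⟩) hpos h0' hv
  obtain ⟨b, hb, hαb⟩ : ∃ b ∈ Icc t₀ (t₀ + δ), α b ≤ 0 := by
    by_contra! hpos
    have hend := (hdescent _ le_rfl hpos _ (right_mem_Icc.2 (by linarith))).2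
    rw [add_sub_cancel_left, hcδ] at hend
    linarith [hpos _ (right_mem_Icc.2 (by linarith))]
  obtain ⟨t₁, ht₁, hαt₁, hfirst⟩ :=
    exists_first_zero_of_continuousOn hb.1 hα.1.continuous.continuousOn h0 hαb
  refine ⟨t₁, ⟨ht₁.1, ht₁.2.trans hb.2⟩, hαt₁, fun s hs => ⟨hfirst s hs, ?_⟩⟩
  exact (hdescent s (hs.2.le.trans (ht₁.2.trans hb.2))
    (fun r hr => hfirst r ⟨hr.1, hr.2.trans_lt hs.2⟩) s (right_mem_Icc.2 hs.1)).1

/-- Descent lemma: if the rod is within `ε` of the (right) horizontal position,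
is not moving upward, and the inertial force is bounded by `M` with
`c = g cos ε - M sin ε > 0`, then the rod reaches the floor within time
`δ = √(2ε/c)`, staying in `(0, ε]` until then. -/
theorem pendulum_descent (g : ℝ) (hg : 0 < g) (u : ℝ → ℝ) (hu : Continuous u)
    (M : ℝ) (hM : 0 ≤ M) (ε : ℝ) (hε : ε ∈ Set.Ioo (0 : ℝ) (Real.pi / 2))
    (c : ℝ) (hc : c = g * Real.cos ε - M * Real.sin ε) (hcpos : 0 < c)
    (δ : ℝ) (hδ : δ = Real.sqrt (2 * ε / c))
    (t₀ : ℝ) (hub : ∀ t ∈ Set.Icc t₀ (t₀ + δ), |u t| ≤ M)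
    (α : ℝ → ℝ) (hα : IsPendulumSolution g u α)
    (h0 : 0 < α t₀) (h0' : α t₀ ≤ ε) (hv : deriv α t₀ ≤ 0) :
    ∃ t₁ ∈ Set.Icc t₀ (t₀ + δ), α t₁ = 0 ∧
      ∀ s ∈ Set.Ico t₀ t₁, α s ∈ Set.Ioc (0 : ℝ) ε :=
  pendulum_descent_general g hg u M ε hε c hc hcpos δ hδ t₀ hub α hα h0 h0' hv
end

section
/- Near-horizontal initial positions fall to the near side (right): for every g > 0 and every continuous u : ℝ → ℝ there exists ε > 0 such that for every φ ∈ (0, ε) and every solution α with α(0) = φ and α'(0) = 0, there exists t₁ > 0 with α(t₁) = 0 and α(s) ∈ (0, ε) for all s ∈ [0, t₁). -/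
open Real Set

theorem image_le_of_deriv_deriv_le {f : ℝ → ℝ} {K a b : ℝ} (hf : Differentiable ℝ f)
    (hf' : Differentiable ℝ (deriv f)) (hab : a ≤ b)
    (hK : ∀ t ∈ Ico a b, deriv (deriv f) t ≤ K) :
    f b ≤ f a + deriv f a * (b - a) + K * (b - a) ^ 2 / 2 := by
  have hslope : ∀ t ∈ Icc a b, deriv f t ≤ deriv f a + K * (t - a) :=
    image_le_of_deriv_right_le_deriv_boundary (B := fun t ↦ deriv f a + K * (t - a))
      hf'.continuous.continuousOn (fun t _ ↦ (hf' t).hasDerivAt.hasDerivWithinAt) (by simp)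
      (by fun_prop)
      (fun t _ ↦ (((hasDerivAt_id t).sub_const a).const_mul K).const_add _ |>.hasDerivWithinAt)
      (fun t ht ↦ by simpa using hK t ht)
  refine image_le_of_deriv_right_le_deriv_boundary
    (B := fun t ↦ f a + deriv f a * (t - a) + K * (t - a) ^ 2 / 2) hf.continuous.continuousOn
    (fun t _ ↦ (hf t).hasDerivAt.hasDerivWithinAt) (by simp) (by fun_prop) (fun t _ ↦ ?_)
    (fun t ht ↦ hslope t (Ico_subset_Icc_self ht)) ⟨hab, le_rfl⟩
  have hline := (((hasDerivAt_id t).sub_const a).const_mul (deriv f a)).const_add (f a)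
  have hquad := (((hasDerivAt_id t).sub_const a).pow 2).const_mul K |>.div_const 2
  exact ((hline.add hquad).congr_deriv (by simp; ring)).hasDerivWithinAt

theorem exists_first_exit_s5 {f : ℝ → ℝ} {U : Set ℝ} {a b : ℝ} (hf : ContinuousOn f (Icc a b))
    (hU : IsOpen U) (ha : f a ∈ U) (hb : f b ∉ U) (hab : a ≤ b) :
    ∃ t ∈ Ioc a b, f t ∈ frontier U ∧ ∀ s ∈ Ico a t, f s ∈ U := by
  set S := Icc a b ∩ f ⁻¹' Uᶜ
  have hS : IsClosed S := hf.preimage_isClosed_of_isClosed isClosed_Icc hU.isClosed_compl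
  have hSne : S.Nonempty := ⟨b, ⟨hab, le_rfl⟩, hb⟩
  have hSbdd : BddBelow S := ⟨a, fun x hx ↦ hx.1.1⟩
  obtain ⟨⟨hat, htb⟩, htU⟩ : sInf S ∈ S := hS.csInf_mem hSne hSbdd
  have hat' : a < sInf S := hat.lt_of_ne fun h ↦ htU (h ▸ ha)
  have hbefore : ∀ s ∈ Ico a (sInf S), f s ∈ U := fun s hs ↦ by
    by_contra hsU
    exact (csInf_le hSbdd ⟨⟨hs.1, hs.2.le.trans htb⟩, hsU⟩).not_gt hs.2
  have hcl : f (sInf S) ∈ closure U :=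
    ((hf _ ⟨hat, htb⟩).mono (Ico_subset_Icc_self.trans (Icc_subset_Icc_right htb))).mem_closure
      (by rw [closure_Ico hat'.ne]; exact right_mem_Icc.mpr hat) hbefore
  exact ⟨sInf S, ⟨hat', htb⟩, hU.frontier_eq ▸ ⟨hcl, htU⟩, hbefore⟩

theorem neg_mul_cos_add_mul_sin_le_s5 {g v θ : ℝ} (hθ0 : 0 ≤ θ) (hθ1 : θ ≤ 1)
    (hvθ : |v| * θ ≤ g / 4) : -g * cos θ + v * sin θ ≤ -(g / 4) := by
  have hg : 0 ≤ g := by nlinarith [abs_nonneg v]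
  have hcos : 1 / 2 ≤ cos θ := by nlinarith [one_sub_sq_div_two_le_cos (x := θ)]
  have hsin0 : 0 ≤ sin θ := sin_nonneg_of_nonneg_of_le_pi hθ0 (by linarith [pi_gt_three])
  have hsin : v * sin θ ≤ |v| * θ :=
    calc v * sin θ ≤ |v| * sin θ := mul_le_mul_of_nonneg_right (le_abs_self v) hsin0
      _ ≤ |v| * θ := mul_le_mul_of_nonneg_left (sin_le hθ0) (abs_nonneg v)
  nlinarith

namespace IsPendulumSolution

variable {g : ℝ} {u α : ℝ → ℝ}

theorem differentiable (hα : IsPendulumSolution g u α) : Differentiable ℝ α :=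
  hα.1.differentiable (by norm_num)

theorem differentiable_deriv (hα : IsPendulumSolution g u α) : Differentiable ℝ (deriv α) :=
  hα.1.differentiable_deriv_two

theorem deriv_deriv_le (hα : IsPendulumSolution g u α) {t : ℝ} (h0 : 0 ≤ α t) (h1 : α t ≤ 1)
    (hu : |u t| * α t ≤ g / 4) : deriv (deriv α) t ≤ -(g / 4) := by
  rw [hα.2 t]
  exact neg_mul_cos_add_mul_sin_le_s5 h0 h1 hu

end IsPendulumSolution

/-- Near-horizontal initial positions fall to the near side (right): if the rod
starts at rest sufficiently close to the right horizontal position, it reaches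
the floor on the right, staying close to the floor until contact. -/
theorem pendulum_falls_right_near_floor (g : ℝ) (hg : 0 < g)
    (u : ℝ → ℝ) (hu : Continuous u) :
    ∃ ε > (0 : ℝ), ∀ φ ∈ Set.Ioo (0 : ℝ) ε, ∀ α : ℝ → ℝ,
      IsPendulumSolution g u α → α 0 = φ → deriv α 0 = 0 →
        ∃ t₁ > (0 : ℝ), α t₁ = 0 ∧ ∀ s ∈ Set.Ico (0 : ℝ) t₁, α s ∈ Set.Ioo (0 : ℝ) ε := by
  obtain ⟨C, hC⟩ := isCompact_Icc.exists_bound_of_continuousOn (hu.continuousOn (s := Icc 0 1))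
  set ε := min 1 (g / (8 * (|C| + 1)))
  have hε0 : 0 < ε := by positivity
  have hεC : 8 * (|C| + 1) * ε ≤ g := (le_div_iff₀' (by positivity)).mp (min_le_right _ _)
  have hε8 : 8 * ε ≤ g := by nlinarith [abs_nonneg C]
  refine ⟨ε, hε0, fun φ ⟨hφ0, hφε⟩ α hα hα0 hα'0 ↦ ?_⟩
  have hfall : ∀ x ∈ Icc (0 : ℝ) 1, (∀ s ∈ Ico 0 x, α s ∈ Icc 0 ε) → α x ≤ φ - g / 8 * x ^ 2 := by
    intro x hx hstay
    have hacc : ∀ t ∈ Ico 0 x, deriv (deriv α) t ≤ -(g / 4) := fun t ht ↦ by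
      obtain ⟨h0, hε⟩ := hstay t ht
      have huC : |u t| ≤ |C| := (hC t ⟨ht.1, ht.2.le.trans hx.2⟩).trans (le_abs_self C)
      exact hα.deriv_deriv_le h0 (hε.trans (min_le_left _ _)) (by nlinarith [abs_nonneg (u t)])
    have := image_le_of_deriv_deriv_le hα.differentiable hα.differentiable_deriv hx.1 hacc
    rw [hα0, hα'0] at this
    linarith
  obtain ⟨b, hb, hbU⟩ : ∃ b ∈ Icc (0 : ℝ) 1, α b ∉ Ioo 0 ε := by
    by_contra! hstay
    have := hfall 1 (right_mem_Icc.mpr zero_le_one)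
      fun s hs ↦ Ioo_subset_Icc_self (hstay s (Ico_subset_Icc_self hs))
    linarith [(hstay 1 (right_mem_Icc.mpr zero_le_one)).1]
  obtain ⟨t₁, ht₁, hfront, hbefore⟩ := exists_first_exit_s5 hα.differentiable.continuous.continuousOn
    isOpen_Ioo (hα0 ▸ ⟨hφ0, hφε⟩) hbU hb.1
  have hbelow := hfall t₁ ⟨ht₁.1.le, ht₁.2.trans hb.2⟩ fun s hs ↦ Ioo_subset_Icc_self (hbefore s hs)
  rw [frontier_Ioo hε0] at hfront
  refine ⟨t₁, ht₁.1, hfront.resolve_right fun h ↦ ?_, hbefore⟩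
  nlinarith [mem_singleton_iff.mp h]
end

section
/- The set L of initial angles from which the rod first falls on the left is open: L := {φ ∈ (0, π) : there exists t > 0 with A φ t = π and A φ s ∈ (0, π) for all s ∈ [0, t)} is an open subset of ℝ. -/
open Real Set Filter Topology
open scoped NNReal

theorem eventually_nhdsGT_lt_of_deriv_pos {f : ℝ → ℝ} {x : ℝ} (hf : 0 < deriv f x) :
    ∀ᶠ y in 𝓝[>] x, f x < f y := by
  have hslope := (hasDerivAt_iff_tendsto_slope_left_right.1
    (differentiableAt_of_deriv_ne_zero hf.ne').hasDerivAt).2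
  filter_upwards [hslope.eventually (eventually_gt_nhds hf), self_mem_nhdsWithin] with y hy hxy
  exact (slope_pos_iff hxy).1 hy

theorem eventually_nhdsLT_lt_of_deriv_pos {f : ℝ → ℝ} {x : ℝ} (hf : 0 < deriv f x) :
    ∀ᶠ y in 𝓝[<] x, f y < f x := by
  have hslope := (hasDerivAt_iff_tendsto_slope_left_right.1
    (differentiableAt_of_deriv_ne_zero hf.ne').hasDerivAt).1
  filter_upwards [hslope.eventually (eventually_gt_nhds hf), self_mem_nhdsWithin] with y hy hyx
  exact (slope_pos_iff_gt hyx).1 hy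

theorem exists_first_hit {f : ℝ → ℝ} {a b c : ℝ} (hab : a ≤ b) (hf : ContinuousOn f (Icc a b))
    (ha : f a < c) (hb : c ≤ f b) : ∃ t ∈ Ioc a b, f t = c ∧ ∀ s ∈ Ico a t, f s < c := by
  set S := Icc a b ∩ f ⁻¹' Ici c
  have hS : IsClosed S := hf.preimage_isClosed_of_isClosed isClosed_Icc isClosed_Ici
  have hSb : b ∈ S := ⟨right_mem_Icc.2 hab, hb⟩
  have hSa : BddBelow S := ⟨a, fun s hs => hs.1.1⟩
  obtain ⟨⟨hat, htb⟩, htc⟩ := hS.csInf_mem ⟨b, hSb⟩ hSa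
  have hbefore : ∀ s ∈ Ico a (sInf S), f s < c := fun s hs =>
    not_le.1 fun hcs => hs.2.not_ge (csInf_le hSa ⟨⟨hs.1, hs.2.le.trans htb⟩, hcs⟩)
  have hat' : a < sInf S := hat.lt_of_ne fun h => (h ▸ ha).not_ge htc
  refine ⟨sInf S, ⟨hat', htb⟩, le_antisymm ?_ htc, hbefore⟩
  by_contra! hct
  obtain ⟨r, hr, hrc⟩ := intermediate_value_Icc hat (hf.mono (Icc_subset_Icc_right htb))
    ⟨ha.le, hct.le⟩
  exact (hbefore r ⟨hr.1, hr.2.lt_of_ne fun h => (h ▸ hrc ▸ hct).false⟩).ne hrc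

theorem exists_gt_of_deriv_pos {f : ℝ → ℝ} {a t : ℝ} (hd : 0 < deriv f t) (ht : 0 < f t)
    (hpos : ∀ s ∈ Ico a t, 0 < f s) : ∃ t₁ > t, f t < f t₁ ∧ ∀ s ∈ Icc a t₁, 0 < f s := by
  have hcont := (differentiableAt_of_deriv_ne_zero hd.ne').continuousAt
  obtain ⟨b, hb, hIco⟩ := exists_Ico_subset_of_mem_nhds (hcont.eventually (eventually_gt_nhds ht))
    ⟨t + 1, by linarith⟩
  obtain ⟨t₁, hft₁, ht₁, ht₁b⟩ :=
    ((eventually_nhdsGT_lt_of_deriv_pos hd).and (Ioo_mem_nhdsGT hb)).exists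
  refine ⟨t₁, ht₁, hft₁, fun s hs => ?_⟩
  rcases lt_or_ge s t with hst | hts
  · exact hpos s ⟨hs.1, hst⟩
  · exact hIco ⟨hts, hs.2.trans_lt ht₁b⟩

-- Gronwall for the first-order system `(x, x')' = (x', F t x)` on `ℝ × ℝ`.
theorem dist_le_of_deriv_deriv_eq {F : ℝ → ℝ → ℝ} {K : ℝ≥0} {a b : ℝ}
    (hF : ∀ t ∈ Ico a b, LipschitzWith K (F t)) {x y : ℝ → ℝ}
    (hx : ContDiff ℝ 2 x) (hy : ContDiff ℝ 2 y)
    (hx'' : ∀ t, deriv (deriv x) t = F t (x t)) (hy'' : ∀ t, deriv (deriv y) t = F t (y t)) :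
    ∀ t ∈ Icc a b, dist (x t) (y t) ≤
      dist (x a, deriv x a) (y a, deriv y a) * exp (max 1 K * (t - a)) := by
  set v : ℝ → ℝ × ℝ → ℝ × ℝ := fun t p => (p.2, F t p.1)
  have hv : ∀ t ∈ Ico a b, LipschitzOnWith (max 1 K) (v t) univ := fun t ht => by
    simpa using ((LipschitzWith.prod_snd (α := ℝ) (β := ℝ)).prodMk
      ((hF t ht).comp LipschitzWith.prod_fst)).lipschitzOnWith (s := univ)
  have htraj : ∀ z : ℝ → ℝ, ContDiff ℝ 2 z → (∀ t, deriv (deriv z) t = F t (z t)) →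
      ∀ t, HasDerivAt (fun t => (z t, deriv z t)) (v t (z t, deriv z t)) t := fun z hz hz'' t => by
    simpa [v, hz''] using
      (hz.differentiable two_ne_zero t).hasDerivAt.prodMk (hz.differentiable_deriv_two t).hasDerivAt
  intro t ht
  calc dist (x t) (y t) ≤ dist (x t, deriv x t) (y t, deriv y t) := by
        rw [Prod.dist_eq]; exact le_max_left _ _
    _ ≤ _ := dist_le_of_trajectories_ODE_of_mem hv
        (fun t _ => (htraj x hx hx'' t).continuousAt.continuousWithinAt)
        (fun t _ => (htraj x hx hx'' t).hasDerivWithinAt) (fun _ _ => trivial)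
        (fun t _ => (htraj y hy hy'' t).continuousAt.continuousWithinAt)
        (fun t _ => (htraj y hy hy'' t).hasDerivWithinAt) (fun _ _ => trivial) le_rfl t ht

theorem lipschitzWith_pendulum_field (g c : ℝ) :
    LipschitzWith (‖g‖₊ + ‖c‖₊) fun x => -g * cos x + c * sin x := by
  refine LipschitzWith.of_dist_le_mul fun x y => ?_
  simp only [Real.dist_eq, NNReal.coe_add, coe_nnnorm, Real.norm_eq_abs]
  calc |-g * cos x + c * sin x - (-g * cos y + c * sin y)|
      = |-g * (cos x - cos y) + c * (sin x - sin y)| := by ring_nf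
    _ ≤ |g| * |cos x - cos y| + |c| * |sin x - sin y| :=
        (abs_add_le _ _).trans_eq (by rw [abs_mul, abs_mul, abs_neg])
    _ ≤ |g| * |x - y| + |c| * |x - y| := by
        gcongr |g| * ?_ + |c| * ?_
        exacts [abs_cos_sub_cos_le x y, abs_sin_sub_sin_le x y]
    _ = (|g| + |c|) * |x - y| := by ring

theorem tendstoUniformlyOn_pendulum {g : ℝ} {u : ℝ → ℝ} (hu : Continuous u) {A : ℝ → ℝ → ℝ}
    (hA : ∀ φ : ℝ, IsPendulumSolution g u (A φ) ∧ A φ 0 = φ ∧ deriv (A φ) 0 = 0) (φ T : ℝ) :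
    TendstoUniformlyOn A (A φ) (𝓝 φ) (Icc 0 T) := by
  obtain ⟨M, hM⟩ := (isCompact_Icc (a := 0) (b := T)).bddAbove_image
    (continuous_nnnorm.comp hu).continuousOn
  set C := exp (max 1 (‖g‖₊ + M) * T)
  have hlip : ∀ t ∈ Ico 0 T, LipschitzWith (‖g‖₊ + M) fun x => -g * cos x + u t * sin x :=
    fun t ht => (lipschitzWith_pendulum_field g (u t)).weaken
      (add_le_add_right (hM (mem_image_of_mem _ (Ico_subset_Icc_self ht))) _)
  have hdist : ∀ ψ, ∀ t ∈ Icc 0 T, dist (A φ t) (A ψ t) ≤ dist φ ψ * C := fun ψ t ht => by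
    have h := dist_le_of_deriv_deriv_eq hlip (hA φ).1.1 (hA ψ).1.1 (hA φ).1.2 (hA ψ).1.2 t ht
    rw [(hA φ).2.1, (hA ψ).2.1, (hA φ).2.2, (hA ψ).2.2, Prod.dist_eq, dist_self,
      max_eq_left dist_nonneg, sub_zero] at h
    exact h.trans (mul_le_mul_of_nonneg_left (exp_le_exp.2 (by gcongr; exact ht.2)) dist_nonneg)
  refine Metric.tendstoUniformlyOn_iff.2 fun ε hε => ?_
  filter_upwards [Metric.ball_mem_nhds φ (div_pos hε (exp_pos _))] with ψ hψ t ht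
  calc dist (A φ t) (A ψ t) ≤ dist φ ψ * C := hdist ψ t ht
    _ < ε := by rw [← lt_div_iff₀ (exp_pos _), dist_comm]; exact hψ

theorem IsPendulumSolution.deriv_pos_of_first_hit {g : ℝ} (hg : 0 < g) {u α : ℝ → ℝ}
    (hα : IsPendulumSolution g u α) {t : ℝ} (ht : 0 < t) (hπ : α t = π)
    (hlt : ∀ s ∈ Ico 0 t, α s < π) : 0 < deriv α t := by
  by_contra! hle
  have hbelow : ∀ᶠ s in 𝓝[<] t, α s < π :=
    mem_of_superset (Ioo_mem_nhdsLT ht) fun s hs => hlt s ⟨hs.1.le, hs.2⟩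
  have habove : ∀ᶠ s in 𝓝[<] t, π ≤ α s := by
    rcases hle.lt_or_eq with hneg | hzero
    · filter_upwards [eventually_nhdsLT_lt_of_deriv_pos (f := -α) (by simpa [deriv.neg])]
        with s hs
      simp only [Pi.neg_apply, neg_lt_neg_iff] at hs
      exact hπ ▸ hs.le
    · have hmin : IsLocalMin α t := isLocalMin_of_deriv_deriv_pos
        (by rw [hα.2, hπ]; simpa using hg) hzero (hα.1.continuous.continuousAt)
      exact hπ ▸ nhdsWithin_le_nhds hmin
  obtain ⟨s, hs⟩ := (hbelow.and habove).exists
  exact hs.1.not_ge hs.2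

/-- The set `L` of initial angles from which the rod first falls to the left
(reaches `π` having stayed strictly above the floor before) is open. -/
theorem pendulum_left_fall_set_isOpen (g : ℝ) (hg : 0 < g)
    (u : ℝ → ℝ) (hu : Continuous u) (A : ℝ → ℝ → ℝ)
    (hA : ∀ φ : ℝ, IsPendulumSolution g u (A φ) ∧ A φ 0 = φ ∧ deriv (A φ) 0 = 0) :
    IsOpen {φ : ℝ | φ ∈ Set.Ioo (0 : ℝ) Real.pi ∧
      ∃ t > (0 : ℝ), A φ t = Real.pi ∧
        ∀ s ∈ Set.Ico (0 : ℝ) t, A φ s ∈ Set.Ioo (0 : ℝ) Real.pi} := by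
  refine isOpen_iff_mem_nhds.2 ?_
  rintro φ ⟨hφ, t, ht, hπ, hfall⟩
  have hd := (hA φ).1.deriv_pos_of_first_hit hg ht hπ fun s hs => (hfall s hs).2
  obtain ⟨t₁, ht₁, hπt₁, hpos⟩ :=
    exists_gt_of_deriv_pos hd (hπ ▸ pi_pos) fun s hs => (hfall s hs).1
  obtain ⟨m, hm, hmin⟩ := isCompact_Icc.exists_forall_le' (hA φ).1.1.continuous.continuousOn hpos
  have hε : 0 < min m (A φ t₁ - π) := lt_min hm (by linarith)
  filter_upwards [isOpen_Ioo.mem_nhds hφ, Metric.tendstoUniformlyOn_iff.1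
    (tendstoUniformlyOn_pendulum hu hA φ t₁) _ hε] with ψ hψ hclose
  have hψpos : ∀ s ∈ Icc 0 t₁, 0 < A ψ s := fun s hs => by
    have := (abs_sub_lt_iff.1 (hclose s hs)).1
    linarith [hmin s hs, min_le_left m (A φ t₁ - π)]
  have hψt₁ : π < A ψ t₁ := by
    have := (abs_sub_lt_iff.1 (hclose t₁ ⟨by linarith, le_rfl⟩)).1
    linarith [min_le_right m (A φ t₁ - π)]
  obtain ⟨t', ⟨ht', ht't₁⟩, hπ', hlt⟩ := exists_first_hit (by linarith)
    (hA ψ).1.1.continuous.continuousOn ((hA ψ).2.1 ▸ hψ.2) hψt₁.le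
  exact ⟨hψ, t', ht', hπ', fun s hs => ⟨hψpos s ⟨hs.1, hs.2.le.trans ht't₁⟩, hlt s hs⟩⟩
end

section
/- Transversality at the first horizontal contact: let α be a solution, and let t₀ < t₁ be such that α(s) ∈ (0, π) for all s ∈ [t₀, t₁). If α(t₁) = 0 then α'(t₁) < 0, and if α(t₁) = π then α'(t₁) > 0. (The rod reaches the floor with strictly nonzero angular velocity; it cannot graze the horizontal position.) -/
open Set Filter Topology

/-- If `deriv α t₁ ≥ 0` and, in case it is zero, the second derivative is
negative at `t₁`, then `α s < α t₁` for `s` slightly below `t₁`. -/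
lemma aux_eventually_lt (α : ℝ → ℝ) (hdiff : Differentiable ℝ α)
    (h1 : Continuous (deriv α)) (h2 : Continuous (deriv (deriv α)))
    (t₁ : ℝ) (hd0 : 0 ≤ deriv α t₁)
    (hdd : deriv α t₁ = 0 → deriv (deriv α) t₁ < 0) :
    ∀ᶠ s in 𝓝[<] t₁, α s < α t₁ := by
  rcases hd0.lt_or_eq with hpos | hzero
  · -- positive first derivative: α' > 0 near t₁
    have : ∀ᶠ s in 𝓝 t₁, 0 < deriv α s := continuousAt_const.eventually_lt h1.continuousAt hpos
    rcases Metric.eventually_nhds_iff.mp this with ⟨δ, hδ, hball⟩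
    have hmono : StrictMonoOn α (Icc (t₁ - δ/2) t₁) := by
      apply strictMonoOn_of_deriv_pos (convex_Icc _ _) (hdiff.continuous.continuousOn)
      intro x hx
      rw [interior_Icc] at hx
      apply hball
      rw [Real.dist_eq, abs_lt]
      constructor <;> [linarith [hx.1]; linarith [hx.2]]
    filter_upwards [Ioo_mem_nhdsLT_of_mem (show t₁ ∈ Ioc (t₁ - δ/2) t₁ from ⟨by linarith, le_refl _⟩)] with s hs
    exact hmono ⟨hs.1.le, hs.2.le⟩ (right_mem_Icc.mpr (by linarith [hs.1])) hs.2
  · -- zero first derivative, negative second derivative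
    have hdd' := hdd hzero.symm
    have : ∀ᶠ s in 𝓝 t₁, deriv (deriv α) s < 0 :=
      h2.continuousAt.eventually_lt continuousAt_const hdd'
    rcases Metric.eventually_nhds_iff.mp this with ⟨δ, hδ, hball⟩
    have hanti : StrictAntiOn (deriv α) (Icc (t₁ - δ/2) t₁) := by
      apply strictAntiOn_of_deriv_neg (convex_Icc _ _) h1.continuousOn
      intro x hx
      rw [interior_Icc] at hx
      apply hball
      rw [Real.dist_eq, abs_lt]
      constructor <;> [linarith [hx.1]; linarith [hx.2]]
    have hderiv_pos : ∀ x ∈ Ioo (t₁ - δ/2) t₁, 0 < deriv α x := by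
      intro x hx
      have := hanti ⟨hx.1.le, hx.2.le⟩ (right_mem_Icc.mpr (by linarith [hx.1])) hx.2
      linarith [hzero ▸ this]
    have hmono : StrictMonoOn α (Icc (t₁ - δ/2) t₁) := by
      apply strictMonoOn_of_deriv_pos (convex_Icc _ _) (hdiff.continuous.continuousOn)
      intro x hx
      rw [interior_Icc] at hx
      exact hderiv_pos x hx
    filter_upwards [Ioo_mem_nhdsLT_of_mem (show t₁ ∈ Ioc (t₁ - δ/2) t₁ from ⟨by linarith, le_refl _⟩)] with s hs
    exact hmono ⟨hs.1.le, hs.2.le⟩ (right_mem_Icc.mpr (by linarith [hs.1])) hs.2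

/-- Transversality at the first horizontal contact: the rod reaches the floor
with strictly nonzero angular velocity. -/
theorem pendulum_transversal_contact (g : ℝ) (hg : 0 < g)
    (u : ℝ → ℝ) (hu : Continuous u)
    (α : ℝ → ℝ) (hα : IsPendulumSolution g u α)
    (t₀ t₁ : ℝ) (ht : t₀ < t₁)
    (habove : ∀ s ∈ Set.Ico t₀ t₁, α s ∈ Set.Ioo (0 : ℝ) Real.pi) :
    (α t₁ = 0 → deriv α t₁ < 0) ∧ (α t₁ = Real.pi → 0 < deriv α t₁) := by
  obtain ⟨hsm, hode⟩ := hα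
  have hdiff : Differentiable ℝ α := hsm.differentiable (by norm_num)
  have hd1 : Continuous (deriv α) := hsm.continuous_deriv (by norm_num)
  have hd2 : Continuous (deriv (deriv α)) := by
    have : (deriv (deriv α)) = fun t => -g * Real.cos (α t) + u t * Real.sin (α t) :=
      funext hode
    rw [this]
    fun_prop
  -- helper to extract a contradiction from "eventually α s < α t₁ / > α t₁"
  have near : ∀ᶠ s in 𝓝[<] t₁, s ∈ Set.Ico t₀ t₁ := by
    filter_upwards [Ioo_mem_nhdsLT_of_mem (show t₁ ∈ Ioc t₀ t₁ from ⟨ht, le_refl _⟩)] with s hs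
    exact ⟨hs.1.le, hs.2⟩
  constructor
  · intro h0
    by_contra hcon
    push_neg at hcon
    have hev := aux_eventually_lt α hdiff hd1 hd2 t₁ hcon (fun hz => by
      rw [hode t₁, h0]; simp [Real.cos_zero, Real.sin_zero]; linarith)
    have : ∀ᶠ s in 𝓝[<] t₁, False := by
      filter_upwards [hev, near] with s hs hs'
      have := (habove s hs').1
      rw [h0] at hs
      linarith
    exact (this.exists_mem.elim fun s hs => absurd hs.2 (by
      rcases this.exists with ⟨x, hx⟩; exact fun _ => hx))
  · intro hpi
    by_contra hcon
    push_neg at hcon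
    -- apply lemma to -α
    have hdiffn : Differentiable ℝ (fun t => -α t) := hdiff.neg
    have hderiv_neg : deriv (fun t => -α t) = fun t => -deriv α t := by
      funext t; exact deriv.neg
    have hd1n : Continuous (deriv (fun t => -α t)) := by rw [hderiv_neg]; exact hd1.neg
    have hdd_neg : deriv (deriv (fun t => -α t)) = fun t => -deriv (deriv α) t := by
      rw [hderiv_neg]
      funext t; exact deriv.neg
    have hd2n : Continuous (deriv (deriv (fun t => -α t))) := by rw [hdd_neg]; exact hd2.neg
    have hev := aux_eventually_lt (fun t => -α t) hdiffn hd1n hd2n t₁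
      (by rw [hderiv_neg]; simpa using hcon)
      (fun hz => by
        rw [hdd_neg]
        show -deriv (deriv α) t₁ < 0
        rw [hode t₁, hpi]
        simp [Real.cos_pi, Real.sin_pi]
        linarith)
    have : ∀ᶠ s in 𝓝[<] t₁, False := by
      filter_upwards [hev, near] with s hs hs'
      have := (habove s hs').2
      simp only [hpi] at hs
      linarith
    rcases this.exists with ⟨x, hx⟩
    exact hx
end
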